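/- arXiv:2501.13873 — 3 statements merged into one kernel-verified Lean document; each statement's English description precedes it below -/
import Mathlib

section
/- Let C be a convex body in ℝ^d, let s, t ≥ 0 and λ ∈ [0,1]. Then (1−λ)·interior_s(C) + λ·interior_t(C) ⊆ interior_{(1−λ)s+λt}(C), where + denotes Minkowski sum and scalar multiplication is pointwise. Consequently, for every unit vector v, the function t ↦ width_v(interior_t(C)) is concave on the interval [0, I(C)] where it is defined. -/
/-!
The Minkowski inclusion comes from
`a • closedBall p s + b • closedBall q t = closedBall (a • p + b • q) (a * s + b * t)` and the
convexity of `C`. The width in direction `v` is `h(v) + h(-v)` for the support function `h`.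
Evaluating `h` on `K_s = innerParallel C s` and `K_t` at maximizers `p` and `q`, the point
`a • p + b • q` lies in `K_{as+bt}`, so `a h_{K_s} + b h_{K_t} ≤ h_{K_{as+bt}}`. This needs
`K_t ≠ ∅` up to `t = I(C)`: by compactness the nested bodies `K_t`, `t < I(C)`, share a point,
which lies in `K_{I(C)}` because `C` is closed.
-/

open Metric Set Pointwise
open scoped RealInnerProductSpace

/-- The directional width of a set `K` in direction `v`. -/
noncomputable def dirWidth {d : ℕ} (v : EuclideanSpace ℝ (Fin d))
    (K : Set (EuclideanSpace ℝ (Fin d))) : ℝ :=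
  sSup ((fun x => ⟪v, x⟫) '' K) - sInf ((fun x => ⟪v, x⟫) '' K)

/-- The inner parallel body of `C` at distance `ρ`. -/
def innerParallel {d : ℕ} (C : Set (EuclideanSpace ℝ (Fin d))) (ρ : ℝ) :
    Set (EuclideanSpace ℝ (Fin d)) :=
  {x ∈ C | closedBall x ρ ⊆ C}

/-- The inradius of `C`. -/
noncomputable def inradius {d : ℕ} (C : Set (EuclideanSpace ℝ (Fin d))) : ℝ :=
  sSup {r : ℝ | ∃ x, closedBall x r ⊆ C}

section ConvexBall

variable {E : Type*} [NormedAddCommGroup E] [NormedSpace ℝ E] [ProperSpace E]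

theorem Convex.closedBall_combo_subset {C : Set E} (hC : Convex ℝ C) {p q : E} {s t a b : ℝ}
    (hs : 0 ≤ s) (ht : 0 ≤ t) (ha : 0 ≤ a) (hb : 0 ≤ b) (hab : a + b = 1)
    (hp : closedBall p s ⊆ C) (hq : closedBall q t ⊆ C) :
    closedBall (a • p + b • q) (a * s + b * t) ⊆ C :=
  calc closedBall (a • p + b • q) (a * s + b * t)
      = a • closedBall p s + b • closedBall q t := by
        rw [_root_.smul_closedBall a p hs, _root_.smul_closedBall b q ht,
          closedBall_add_closedBall (by positivity) (by positivity),
          Real.norm_of_nonneg ha, Real.norm_of_nonneg hb]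
    _ ⊆ a • C + b • C := add_subset_add (smul_set_mono hp) (smul_set_mono hq)
    _ ⊆ C := hC.set_combo_subset ha hb hab

end ConvexBall

section SupportFunction

variable {E : Type*} [NormedAddCommGroup E] [InnerProductSpace ℝ E]

noncomputable def supportFunction (v : E) (K : Set E) : ℝ :=
  sSup ((fun x => ⟪v, x⟫) '' K)

theorem supportFunction_eq_of_isMaxOn {v p : E} {K : Set E} (hp : p ∈ K)
    (hmax : IsMaxOn (fun x => ⟪v, x⟫) K p) : supportFunction v K = ⟪v, p⟫ :=
  IsGreatest.csSup_eq ⟨mem_image_of_mem _ hp, forall_mem_image.2 hmax⟩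

theorem combo_supportFunction_le (v : E) {K₁ K₂ K : Set E} (h₁ : IsCompact K₁)
    (h₂ : IsCompact K₂) (hK : IsCompact K) (hne₁ : K₁.Nonempty) (hne₂ : K₂.Nonempty)
    {a b : ℝ} (hsub : a • K₁ + b • K₂ ⊆ K) :
    a * supportFunction v K₁ + b * supportFunction v K₂ ≤ supportFunction v K := by
  have hφ : Continuous fun x : E => ⟪v, x⟫ := continuous_const.inner continuous_id
  obtain ⟨p, hp, hpmax⟩ := h₁.exists_isMaxOn hne₁ hφ.continuousOn
  obtain ⟨q, hq, hqmax⟩ := h₂.exists_isMaxOn hne₂ hφ.continuousOn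
  have hpq : a • p + b • q ∈ K := hsub (add_mem_add (smul_mem_smul_set hp) (smul_mem_smul_set hq))
  calc a * supportFunction v K₁ + b * supportFunction v K₂ = ⟪v, a • p + b • q⟫ := by
        rw [supportFunction_eq_of_isMaxOn hp hpmax, supportFunction_eq_of_isMaxOn hq hqmax,
          inner_add_right, real_inner_smul_right, real_inner_smul_right]
    _ ≤ supportFunction v K := le_csSup (hK.image hφ).bddAbove (mem_image_of_mem _ hpq)

end SupportFunction

section InnerParallel

variable {d : ℕ} {C : Set (EuclideanSpace ℝ (Fin d))}

theorem dirWidth_eq_supportFunction_add (v : EuclideanSpace ℝ (Fin d))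
    (K : Set (EuclideanSpace ℝ (Fin d))) :
    dirWidth v K = supportFunction v K + supportFunction (-v) K := by
  have hneg : (fun x => ⟪-v, x⟫) '' K = -((fun x => ⟪v, x⟫) '' K) := by
    rw [← image_neg_eq_neg, image_image]
    simp only [inner_neg_left]
  rw [dirWidth, supportFunction, supportFunction, hneg, Real.sSup_neg]
  ring

theorem mem_innerParallel_iff {x : EuclideanSpace ℝ (Fin d)} {ρ : ℝ} (hρ : 0 ≤ ρ) :
    x ∈ innerParallel C ρ ↔ closedBall x ρ ⊆ C :=
  ⟨And.right, fun h => ⟨h (mem_closedBall_self hρ), h⟩⟩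

theorem innerParallel_antitone (C : Set (EuclideanSpace ℝ (Fin d))) :
    Antitone (innerParallel C) := fun _ _ h _ hx =>
  ⟨hx.1, (closedBall_subset_closedBall h).trans hx.2⟩

theorem isClosed_innerParallel (hC : IsClosed C) (ρ : ℝ) : IsClosed (innerParallel C ρ) := by
  have h : innerParallel C ρ =
      C ∩ ⋂ w ∈ closedBall (0 : EuclideanSpace ℝ (Fin d)) ρ, (· + w) ⁻¹' C := by
    ext x
    simp only [innerParallel, mem_sep_iff, mem_inter_iff, mem_iInter, mem_preimage,
      mem_closedBall_zero_iff]
    refine and_congr_right fun _ => ⟨fun h w hw => h ?_, fun h y hy => ?_⟩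
    · simpa [mem_closedBall, dist_eq_norm] using hw
    · simpa using h (y - x) (by simpa [dist_eq_norm] using hy)
  rw [h]
  exact hC.inter (isClosed_biInter fun w _ => hC.preimage (continuous_add_const w))

theorem isCompact_innerParallel (hC : IsCompact C) (ρ : ℝ) : IsCompact (innerParallel C ρ) :=
  hC.of_isClosed_subset (isClosed_innerParallel hC.isClosed ρ) fun _ hx => hx.1

theorem Convex.combo_innerParallel_subset (hC : Convex ℝ C) {s t a b : ℝ} (hs : 0 ≤ s)
    (ht : 0 ≤ t) (ha : 0 ≤ a) (hb : 0 ≤ b) (hab : a + b = 1) :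
    a • innerParallel C s + b • innerParallel C t ⊆ innerParallel C (a * s + b * t) := by
  rintro _ ⟨_, ⟨p, hp, rfl⟩, _, ⟨q, hq, rfl⟩, rfl⟩
  exact (mem_innerParallel_iff (by positivity)).2
    (hC.closedBall_combo_subset hs ht ha hb hab hp.2 hq.2)

theorem mem_innerParallel_of_forall_lt (hC : IsClosed C) {x : EuclideanSpace ℝ (Fin d)}
    {r : ℝ} (hr : 0 < r) (hx : ∀ t ∈ Ico 0 r, x ∈ innerParallel C t) :
    x ∈ innerParallel C r := by
  have hball : ball x r ⊆ C := fun y hy =>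
    (hx _ ⟨dist_nonneg, hy⟩).2 (mem_closedBall.2 le_rfl)
  refine (mem_innerParallel_iff hr.le).2 ?_
  rw [← closure_ball x hr.ne']
  exact closure_minimal hball hC

theorem bddAbove_setOf_closedBall_subset [Nontrivial (EuclideanSpace ℝ (Fin d))]
    (hC : Bornology.IsBounded C) : BddAbove {r : ℝ | ∃ x, closedBall x r ⊆ C} := by
  refine ⟨diam C / 2, ?_⟩
  rintro r ⟨x, hx⟩
  rcases lt_or_ge r 0 with hr | hr
  · linarith [diam_nonneg (s := C)]
  · linarith [diam_closedBall_eq x hr ▸ diam_mono hx hC]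

theorem inradius_pos (hbdd : BddAbove {r : ℝ | ∃ x, closedBall x r ⊆ C})
    (hint : (interior C).Nonempty) : 0 < inradius C := by
  obtain ⟨x, hx⟩ := hint
  obtain ⟨ε, hε, hball⟩ := Metric.isOpen_iff.1 isOpen_interior x hx
  have hmem : ε / 2 ∈ {r : ℝ | ∃ x, closedBall x r ⊆ C} :=
    ⟨x, (closedBall_subset_ball (half_lt_self hε)).trans (hball.trans interior_subset)⟩
  exact (half_pos hε).trans_le (le_csSup hbdd hmem)

theorem IsCompact.innerParallel_inradius_nonempty (hC : IsCompact C) (hpos : 0 < inradius C) :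
    (innerParallel C (inradius C)).Nonempty := by
  have hne : ∀ t : Ico 0 (inradius C), (innerParallel C t).Nonempty := by
    rintro ⟨t, ht0, ht⟩
    obtain ⟨r, ⟨x, hx⟩, htr⟩ := exists_lt_of_lt_csSup (s := {r : ℝ | ∃ x, closedBall x r ⊆ C})
      ⟨-1, 0, by simp⟩ ht
    exact ⟨x, (mem_innerParallel_iff ht0).2 ((closedBall_subset_closedBall htr.le).trans hx)⟩
  have : Nonempty (Ico 0 (inradius C)) := ⟨⟨0, le_rfl, hpos⟩⟩
  obtain ⟨x, hx⟩ := IsCompact.nonempty_iInter_of_directed_nonempty_isCompact_isClosed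
    (fun t : Ico 0 (inradius C) => innerParallel C t)
    ((innerParallel_antitone C).comp_monotone (Subtype.mono_coe _)).directed_ge hne
    (fun t => isCompact_innerParallel hC t) (fun t => isClosed_innerParallel hC.isClosed t)
  exact ⟨x, mem_innerParallel_of_forall_lt hC.isClosed hpos fun t ht =>
    mem_iInter.1 hx ⟨t, ht⟩⟩

theorem concaveOn_dirWidth_innerParallel (hC : IsCompact C) (hconv : Convex ℝ C)
    (hne : (innerParallel C (inradius C)).Nonempty) (v : EuclideanSpace ℝ (Fin d)) :
    ConcaveOn ℝ (Icc 0 (inradius C)) fun t => dirWidth v (innerParallel C t) := by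
  refine ⟨convex_Icc _ _, fun s hs t ht a b ha hb hab => ?_⟩
  have hsub := hconv.combo_innerParallel_subset hs.1 ht.1 ha hb hab
  have hK := isCompact_innerParallel hC
  have hne' : ∀ r ∈ Icc 0 (inradius C), (innerParallel C r).Nonempty := fun r hr =>
    hne.mono (innerParallel_antitone C hr.2)
  have hv := combo_supportFunction_le v (hK s) (hK t) (hK _) (hne' s hs) (hne' t ht) hsub
  have hnv := combo_supportFunction_le (-v) (hK s) (hK t) (hK _) (hne' s hs) (hne' t ht) hsub
  simp only [smul_eq_mul, dirWidth_eq_supportFunction_add]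
  linarith

end InnerParallel

/-- For a convex body `C`, `s, t ≥ 0` and `λ ∈ [0,1]`, the Minkowski combination of inner
parallel bodies satisfies
`(1−λ)·interior_s(C) + λ·interior_t(C) ⊆ interior_{(1−λ)s+λt}(C)`; consequently, for every
unit vector `v` the map `t ↦ width_v (interior_t C)` is concave on `[0, I(C)]`. -/
theorem innerParallel_concave {d : ℕ} (C : Set (EuclideanSpace ℝ (Fin d)))
    (hcomp : IsCompact C) (hconv : Convex ℝ C) (hint : (interior C).Nonempty)
    (v : EuclideanSpace ℝ (Fin d)) (hv : ‖v‖ = 1) :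
    (∀ s t lam : ℝ, 0 ≤ s → 0 ≤ t → 0 ≤ lam → lam ≤ 1 →
      (1 - lam) • innerParallel C s + lam • innerParallel C t ⊆
        innerParallel C ((1 - lam) * s + lam * t)) ∧
    ConcaveOn ℝ (Icc 0 (inradius C)) (fun t => dirWidth v (innerParallel C t)) := by
  have : Nontrivial (EuclideanSpace ℝ (Fin d)) := nontrivial_of_ne v 0 (by rintro rfl; simp at hv)
  have hbdd := bddAbove_setOf_closedBall_subset hcomp.isBounded
  refine ⟨fun s t lam hs ht h0 h1 =>
      hconv.combo_innerParallel_subset hs ht (sub_nonneg.2 h1) h0 (sub_add_cancel 1 lam), ?_⟩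
  exact concaveOn_dirWidth_innerParallel hcomp hconv
    (hcomp.innerParallel_inradius_nonempty (inradius_pos hbdd hint)) v
end

section
/- Let C be a convex body in ℝ^d, n ≥ 2 an integer, and ρ > 0 with width(C^ρ) = 2nρ. Let v be a unit vector attaining this width, i.e., width_v(C^ρ) = 2nρ, and let α = min_{y ∈ C^ρ} v·y. Define the n pieces C_1 = C ∩ {x : v·x ≤ α + 2ρ}, C_k = C ∩ {x : α + 2ρ(k−1) ≤ v·x ≤ α + 2ρk} for 1 < k < n, and C_n = C ∩ {x : v·x ≥ α + 2ρ(n−1)}. Then every closed ball contained in some piece C_k has radius at most ρ; in particular max_k I(C_k) ≤ ρ whenever C_k is a convex body. -/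
open Metric Set
open scoped RealInnerProductSpace

/-- The width of `K`: the minimum directional width over all unit directions. -/
noncomputable def setWidth {d : ℕ} (K : Set (EuclideanSpace ℝ (Fin d))) : ℝ :=
  sInf {w | ∃ v : EuclideanSpace ℝ (Fin d), ‖v‖ = 1 ∧ w = dirWidth v K}

/-- The `ρ`-rounded body `C^ρ`: the union of all closed `ρ`-balls contained in `C`. -/
def rounded {d : ℕ} (C : Set (EuclideanSpace ℝ (Fin d))) (ρ : ℝ) :
    Set (EuclideanSpace ℝ (Fin d)) :=
  {y | ∃ x, closedBall x ρ ⊆ C ∧ y ∈ closedBall x ρ}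

/-!
A closed ball of radius `r` around `x` contains `x ± r v`, at heights `⟪v, x⟫ ± r`, so a slab
of width `2ρ` (a middle piece) holds no ball of radius `> ρ`. If the first piece held a ball of
radius `r > ρ`, the concentric `ρ`-ball would lie in `C`, so `x - ρ v ∈ C^ρ` gives
`α + ρ ≤ ⟪v, x⟫`, while `⟪v, x⟫ + r ≤ α + 2ρ`; hence `r ≤ ρ`. The last piece is symmetric, with
`x + ρ v ∈ C^ρ` and `sup_{C^ρ} ⟪v, ·⟫ = α + 2nρ`.
-/

section Slab

variable {E : Type*} [NormedAddCommGroup E] [InnerProductSpace ℝ E] {v x : E} {r : ℝ}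

lemma add_smul_mem_closedBall_of_norm_eq_one (hv : ‖v‖ = 1) {t : ℝ} (ht : |t| ≤ r) :
    x + t • v ∈ closedBall x r := by
  simpa [dist_eq_norm, norm_smul, hv] using ht

lemma inner_add_smul_of_norm_eq_one (hv : ‖v‖ = 1) (x : E) (t : ℝ) :
    ⟪v, x + t • v⟫ = ⟪v, x⟫ + t := by
  rw [inner_add_right, real_inner_smul_right, real_inner_self_eq_norm_sq, hv, one_pow, mul_one]

lemma inner_add_le_of_closedBall_subset (hv : ‖v‖ = 1) (hr : 0 ≤ r) {b : ℝ}
    (h : closedBall x r ⊆ {y | ⟪v, y⟫ ≤ b}) : ⟪v, x⟫ + r ≤ b := by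
  have hmem : ⟪v, x + r • v⟫ ≤ b :=
    h (add_smul_mem_closedBall_of_norm_eq_one hv (abs_of_nonneg hr).le)
  rwa [inner_add_smul_of_norm_eq_one hv] at hmem

lemma le_inner_sub_of_closedBall_subset (hv : ‖v‖ = 1) (hr : 0 ≤ r) {a : ℝ}
    (h : closedBall x r ⊆ {y | a ≤ ⟪v, y⟫}) : a ≤ ⟪v, x⟫ - r := by
  have hmem : a ≤ ⟪v, x + (-r) • v⟫ :=
    h (add_smul_mem_closedBall_of_norm_eq_one hv (abs_neg r ▸ (abs_of_nonneg hr).le))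
  rwa [inner_add_smul_of_norm_eq_one hv, ← sub_eq_add_neg] at hmem

lemma bddBelow_image_inner {K : Set E} (hK : Bornology.IsBounded K) (v : E) :
    BddBelow ((fun y => ⟪v, y⟫) '' K) :=
  ((innerSL ℝ v).lipschitz.isBounded_image hK).bddBelow

lemma bddAbove_image_inner {K : Set E} (hK : Bornology.IsBounded K) (v : E) :
    BddAbove ((fun y => ⟪v, y⟫) '' K) :=
  ((innerSL ℝ v).lipschitz.isBounded_image hK).bddAbove

end Slab

section Rounded

variable {d : ℕ} {C : Set (EuclideanSpace ℝ (Fin d))} {ρ : ℝ} {v x : EuclideanSpace ℝ (Fin d)}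

lemma rounded_subset (C : Set (EuclideanSpace ℝ (Fin d))) (ρ : ℝ) : rounded C ρ ⊆ C :=
  fun _ ⟨_, hC, hy⟩ => hC hy

lemma sInf_inner_rounded_add_le (hC : Bornology.IsBounded C) (hv : ‖v‖ = 1) (hρ : 0 ≤ ρ)
    (hx : closedBall x ρ ⊆ C) : sInf ((fun y => ⟪v, y⟫) '' rounded C ρ) + ρ ≤ ⟪v, x⟫ := by
  have hmem : x + (-ρ) • v ∈ rounded C ρ :=
    ⟨x, hx, add_smul_mem_closedBall_of_norm_eq_one hv (abs_neg ρ ▸ (abs_of_nonneg hρ).le)⟩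
  have hle : sInf ((fun y => ⟪v, y⟫) '' rounded C ρ) ≤ ⟪v, x + (-ρ) • v⟫ :=
    csInf_le (bddBelow_image_inner (hC.subset (rounded_subset C ρ)) v) ⟨_, hmem, rfl⟩
  rw [inner_add_smul_of_norm_eq_one hv] at hle
  linarith

lemma inner_add_le_sSup_inner_rounded (hC : Bornology.IsBounded C) (hv : ‖v‖ = 1)
    (hρ : 0 ≤ ρ) (hx : closedBall x ρ ⊆ C) :
    ⟪v, x⟫ + ρ ≤ sSup ((fun y => ⟪v, y⟫) '' rounded C ρ) := by
  have hmem : x + ρ • v ∈ rounded C ρ :=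
    ⟨x, hx, add_smul_mem_closedBall_of_norm_eq_one hv (abs_of_nonneg hρ).le⟩
  have hle : ⟪v, x + ρ • v⟫ ≤ sSup ((fun y => ⟪v, y⟫) '' rounded C ρ) :=
    le_csSup (bddAbove_image_inner (hC.subset (rounded_subset C ρ)) v) ⟨_, hmem, rfl⟩
  rwa [inner_add_smul_of_norm_eq_one hv] at hle

end Rounded

theorem pieces_inradius_le_general {d : ℕ} (C : Set (EuclideanSpace ℝ (Fin d)))
    (hcomp : IsCompact C)
    (n : ℕ) (ρ : ℝ) (hρ : 0 < ρ)
    (v : EuclideanSpace ℝ (Fin d)) (hv : ‖v‖ = 1)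
    (hvwidth : dirWidth v (rounded C ρ) = 2 * n * ρ)
    (α : ℝ) (hα : α = sInf ((fun y => ⟪v, y⟫) '' rounded C ρ)) :
    (∀ (x : EuclideanSpace ℝ (Fin d)) (r : ℝ),
        closedBall x r ⊆ C ∩ {y | ⟪v, y⟫ ≤ α + 2 * ρ} → r ≤ ρ) ∧
    (∀ k : ℕ, 1 < k → k < n →
      ∀ (x : EuclideanSpace ℝ (Fin d)) (r : ℝ),
        closedBall x r ⊆
            C ∩ {y | α + 2 * ρ * ((k : ℝ) - 1) ≤ ⟪v, y⟫ ∧ ⟪v, y⟫ ≤ α + 2 * ρ * (k : ℝ)} →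
        r ≤ ρ) ∧
    (∀ (x : EuclideanSpace ℝ (Fin d)) (r : ℝ),
        closedBall x r ⊆ C ∩ {y | α + 2 * ρ * ((n : ℝ) - 1) ≤ ⟪v, y⟫} → r ≤ ρ) := by
  have hsup : sSup ((fun y => ⟪v, y⟫) '' rounded C ρ) = α + 2 * n * ρ := by
    rw [dirWidth] at hvwidth
    linarith
  refine ⟨fun x r h => ?_, fun k _ _ x r h => ?_, fun x r h => ?_⟩ <;> by_contra! hr
  all_goals have hr₀ : 0 ≤ r := hρ.le.trans hr.le
  · have hlow := sInf_inner_rounded_add_le hcomp.isBounded hv hρ.le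
      ((closedBall_subset_closedBall hr.le).trans (h.trans inter_subset_left))
    have hhigh := inner_add_le_of_closedBall_subset hv hr₀ (h.trans inter_subset_right)
    linarith
  · have hhigh := inner_add_le_of_closedBall_subset hv hr₀ fun y hy => (h hy).2.2
    have hlow := le_inner_sub_of_closedBall_subset hv hr₀ fun y hy => (h hy).2.1
    linarith
  · have hhigh := inner_add_le_sSup_inner_rounded hcomp.isBounded hv hρ.le
      ((closedBall_subset_closedBall hr.le).trans (h.trans inter_subset_left))
    have hlow := le_inner_sub_of_closedBall_subset hv hr₀ (h.trans inter_subset_right)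
    linarith

/-- For a convex body `C`, `n ≥ 2` and `ρ > 0` with `width (C^ρ) = 2nρ`, let `v` be a unit
vector attaining this width and `α = min {v·y : y ∈ C^ρ}`. Cutting `C` by the `n − 1`
parallel hyperplanes `{x : v·x = α + 2ρk}`, `k = 1, …, n−1`, every closed ball contained in
one of the resulting `n` pieces has radius at most `ρ`. -/
theorem pieces_inradius_le {d : ℕ} (C : Set (EuclideanSpace ℝ (Fin d)))
    (hcomp : IsCompact C) (hconv : Convex ℝ C) (hint : (interior C).Nonempty)
    (n : ℕ) (hn : 2 ≤ n) (ρ : ℝ) (hρ : 0 < ρ)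
    (hwidth : setWidth (rounded C ρ) = 2 * n * ρ)
    (v : EuclideanSpace ℝ (Fin d)) (hv : ‖v‖ = 1)
    (hvwidth : dirWidth v (rounded C ρ) = 2 * n * ρ)
    (α : ℝ) (hα : α = sInf ((fun y => ⟪v, y⟫) '' rounded C ρ)) :
    (∀ (x : EuclideanSpace ℝ (Fin d)) (r : ℝ),
        closedBall x r ⊆ C ∩ {y | ⟪v, y⟫ ≤ α + 2 * ρ} → r ≤ ρ) ∧
    (∀ k : ℕ, 1 < k → k < n →
      ∀ (x : EuclideanSpace ℝ (Fin d)) (r : ℝ),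
        closedBall x r ⊆
            C ∩ {y | α + 2 * ρ * ((k : ℝ) - 1) ≤ ⟪v, y⟫ ∧ ⟪v, y⟫ ≤ α + 2 * ρ * (k : ℝ)} →
        r ≤ ρ) ∧
    (∀ (x : EuclideanSpace ℝ (Fin d)) (r : ℝ),
        closedBall x r ⊆ C ∩ {y | α + 2 * ρ * ((n : ℝ) - 1) ≤ ⟪v, y⟫} → r ≤ ρ) :=
  pieces_inradius_le_general C hcomp n ρ hρ v hv hvwidth α hα
end

section
/- Let A ∈ ℝ^{m×d} and b ∈ ℝ^m be such that the polyhedron P = {x ∈ ℝ^d : Ax ≤ b} is nonempty and bounded. Then there exists a subset S ⊆ [m] with |S| ≤ 2d such that the polyhedron {x ∈ ℝ^d : A_i·x ≤ b_i for all i ∈ S} is bounded. -/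
/-!
Boundedness of the nonempty polyhedron `{x | ∀ i, ⟪A i, x⟫ ≤ b i}` means that no nonzero `y`
has `⟪A i, y⟫ ≤ 0` for all `i`, so by Farkas' lemma the rows `A i` generate the whole space as a
cone. Pick a set `T₁` of at most `d` rows forming a basis, and, by Carathéodory's theorem for
cones, a set `T₂` of at most `d` rows whose cone contains `-∑ i ∈ T₁, A i`. The cone generated by
`T₁ ∪ T₂` then contains `±A i` for `i ∈ T₁`, hence everything, and a subsystem whose rows generate
the whole space as a cone bounds `⟪v, x⟫` from above for every `v`, hence is bounded.
-/

open Set Module Submodule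
open scoped RealInnerProductSpace

lemma LinearIndepOn.finset_card_le_finrank {R M ι : Type*} [Ring R] [StrongRankCondition R]
    [AddCommGroup M] [Module R M] [Module.Finite R M] {A : ι → M} {T : Finset ι}
    (h : LinearIndepOn R A T) : T.card ≤ finrank R M := by
  simpa using h.fintype_card_le_finrank

namespace PointedCone

section LinearOrderedField

variable {𝕜 E ι : Type*} [Field 𝕜] [LinearOrder 𝕜] [IsStrictOrderedRing 𝕜]
  [AddCommGroup E] [Module 𝕜 E] {A : ι → E}

lemma mem_hull_image_finset_iff {T : Finset ι} {x : E} :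
    x ∈ hull 𝕜 (A '' T) ↔ ∃ c : ι → 𝕜, (∀ i ∈ T, 0 ≤ c i) ∧ ∑ i ∈ T, c i • A i = x := by
  rw [mem_span_image_finset_iff_exists_fun']
  constructor
  · rintro ⟨c, rfl⟩
    exact ⟨fun i => c i, fun i _ => (c i).2, rfl⟩
  · rintro ⟨c, hc, rfl⟩
    refine ⟨fun i => ⟨max (c i) 0, le_max_right _ _⟩, Finset.sum_congr rfl fun i hi => ?_⟩
    simp [max_eq_left (hc i hi)]

lemma exists_mem_hull_image_erase [DecidableEq ι] {T : Finset ι} {x : E}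
    (hT : ¬LinearIndepOn 𝕜 A T) (hx : x ∈ hull 𝕜 (A '' T)) :
    ∃ j ∈ T, x ∈ hull 𝕜 (A '' ↑(T.erase j)) := by
  obtain ⟨c, hc, rfl⟩ := mem_hull_image_finset_iff.1 hx
  obtain ⟨g, hg, hgpos⟩ : ∃ g : ι → 𝕜, ∑ i ∈ T, g i • A i = 0 ∧ ∃ i ∈ T, 0 < g i := by
    obtain ⟨g, hg, i, hi, hgi⟩ := not_linearIndepOn_finset_iff.1 hT
    rcases hgi.lt_or_gt with hneg | hpos
    · exact ⟨-g, by simp [Finset.sum_neg_distrib, hg], i, hi, neg_pos.2 hneg⟩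
    · exact ⟨g, hg, i, hi, hpos⟩
  -- Move from `c` along `-g` until the first coefficient vanishes.
  obtain ⟨j, hj, hjmin⟩ := (T.filter (0 < g ·)).exists_min_image (fun i => c i / g i)
    (hgpos.imp fun i ⟨hi, hgi⟩ => Finset.mem_filter.2 ⟨hi, hgi⟩)
  rw [Finset.mem_filter] at hj
  set t := c j / g j
  have hc' : ∀ i ∈ T, 0 ≤ c i - t * g i := by
    intro i hi
    rcases le_or_gt (g i) 0 with hgi | hgi
    · nlinarith [hc i hi, div_nonneg (hc j hj.1) hj.2.le]
    · have := hjmin i (Finset.mem_filter.2 ⟨hi, hgi⟩)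
      rw [le_div_iff₀ hgi] at this
      linarith
  refine ⟨j, hj.1, mem_hull_image_finset_iff.2
    ⟨fun i => c i - t * g i, fun i hi => hc' i (Finset.mem_of_mem_erase hi), ?_⟩⟩
  rw [Finset.sum_erase _ (by simp [t, div_mul_cancel₀ _ hj.2.ne'])]
  simp [sub_smul, mul_smul, ← Finset.smul_sum, hg]

/-- Carathéodory's theorem for cones. -/
theorem exists_linearIndepOn_mem_hull_image [DecidableEq ι] {T : Finset ι} {x : E}
    (hx : x ∈ hull 𝕜 (A '' T)) :
    ∃ T' ⊆ T, LinearIndepOn 𝕜 A T' ∧ x ∈ hull 𝕜 (A '' T') := by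
  induction T using Finset.strongInduction with
  | H T ih =>
    by_cases hT : LinearIndepOn 𝕜 A T
    · exact ⟨T, subset_rfl, hT, hx⟩
    · obtain ⟨j, hj, hxj⟩ := exists_mem_hull_image_erase hT hx
      obtain ⟨T', hT', hli, hx'⟩ := ih _ (Finset.erase_ssubset hj) hxj
      exact ⟨T', hT'.trans (Finset.erase_subset _ _), hli, hx'⟩

lemma span_image_le_lineal {C : PointedCone 𝕜 E} {T : Finset ι} (hA : ∀ i ∈ T, A i ∈ C)
    (hneg : -∑ i ∈ T, A i ∈ C) : span 𝕜 (A '' T) ≤ C.lineal := by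
  classical
  rw [Submodule.span_le]
  rintro _ ⟨j, hj, rfl⟩
  refine mem_lineal.2 ⟨hA j hj, ?_⟩
  have : -A j = -∑ i ∈ T, A i + ∑ i ∈ T.erase j, A i := by
    rw [← Finset.add_sum_erase T A hj]; abel
  rw [this]
  exact C.add_mem hneg (C.sum_mem fun i hi => hA i (Finset.mem_of_mem_erase hi))

theorem exists_card_le_two_mul_finrank_hull_eq_top [Fintype ι] [FiniteDimensional 𝕜 E]
    (h : hull 𝕜 (range A) = ⊤) :
    ∃ S : Finset ι, S.card ≤ 2 * finrank 𝕜 E ∧ hull 𝕜 (A '' S) = ⊤ := by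
  classical
  obtain ⟨B, -, -, hB, hBli⟩ :=
    exists_linearIndepOn_extension (K := 𝕜) (v := A) (linearIndepOn_empty 𝕜 A) (empty_subset univ)
  set T₁ := (toFinite B).toFinset
  have hT₁ : LinearIndepOn 𝕜 A T₁ := by simpa [T₁] using hBli
  obtain ⟨T₂, -, hT₂, hneg⟩ :=
    exists_linearIndepOn_mem_hull_image (A := A) (T := Finset.univ) (x := -∑ i ∈ T₁, A i)
      (by rw [Finset.coe_univ, image_univ, h]; trivial)
  refine ⟨T₁ ∪ T₂, (Finset.card_union_le _ _).trans ?_, eq_top_iff.2 fun v _ => ?_⟩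
  · linarith [hT₁.finset_card_le_finrank, hT₂.finset_card_le_finrank]
  have hlineal := span_image_le_lineal (C := hull 𝕜 (A '' ↑(T₁ ∪ T₂)))
    (fun i hi => subset_hull ⟨i, by simp [hi], rfl⟩) (span_mono (image_mono (by simp)) hneg)
  have hv : v ∈ span 𝕜 (range A) := hull_le_span 𝕜 _ (h ▸ mem_top)
  have hv' : v ∈ span 𝕜 (A '' T₁) := by
    refine span_le.2 ?_ hv
    simpa [T₁] using hB
  exact (mem_lineal.1 (hlineal hv')).1

end LinearOrderedField

section Topology

variable {E ι : Type*} [AddCommGroup E] [TopologicalSpace E] [IsTopologicalAddGroup E]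
  [Module ℝ E] [ContinuousSMul ℝ E] [T2Space E] {A : ι → E}

lemma isClosed_hull_image_of_linearIndepOn {T : Finset ι} (hT : LinearIndepOn ℝ A T) :
    IsClosed (hull ℝ (A '' T) : Set E) := by
  set f := Fintype.linearCombination ℝ (fun i : T => A i)
  have hf : Topology.IsClosedEmbedding f := LinearMap.isClosedEmbedding_of_injective
    (LinearMap.ker_eq_bot.2 (linearIndependent_iff_injective_fintypeLinearCombination.1 hT))
  have : (hull ℝ (A '' T) : Set E) = f '' Ici 0 := by
    refine Subset.antisymm (fun x hx => ?_) ?_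
    · obtain ⟨c, hc, rfl⟩ := mem_hull_image_finset_iff.1 hx
      exact ⟨fun i => c i, fun i => hc i i.2, by
        simp only [f, Fintype.linearCombination_apply]
        exact Finset.sum_coe_sort T (fun i => c i • A i)⟩
    · rintro _ ⟨c, hc, rfl⟩
      rw [Fintype.linearCombination_apply]
      exact sum_mem fun i _ => (hull ℝ _).smul_mem (hc i) (subset_hull ⟨i, i.2, rfl⟩)
  rw [this]
  exact hf.isClosedMap _ isClosed_Ici

lemma isClosed_hull_image (T : Finset ι) : IsClosed (hull ℝ (A '' T) : Set E) := by
  classical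
  have : (hull ℝ (A '' T) : Set E) =
      ⋃ T' ∈ {T' : Finset ι | T' ⊆ T ∧ LinearIndepOn ℝ A T'}, hull ℝ (A '' T') := by
    refine Subset.antisymm (fun x hx => ?_)
      (iUnion₂_subset fun T' hT' => span_mono (image_mono (Finset.coe_subset.2 hT'.1)))
    obtain ⟨T', hT', hli, hx'⟩ := exists_linearIndepOn_mem_hull_image hx
    exact mem_biUnion ⟨hT', hli⟩ hx'
  rw [this]
  exact (T.powerset.finite_toSet.subset fun T' h => Finset.mem_powerset.2 h.1).isClosed_biUnion
    fun T' h => isClosed_hull_image_of_linearIndepOn h.2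

end Topology

section InnerProductSpace

variable {E ι : Type*} [NormedAddCommGroup E] [InnerProductSpace ℝ E] {A : ι → E}

/-- Farkas' lemma for a finitely generated cone. -/
theorem hull_range_eq_top_of_forall_inner_nonpos [CompleteSpace E] [Finite ι]
    (h : ∀ y, (∀ i, ⟪A i, y⟫ ≤ 0) → y = 0) : hull ℝ (range A) = ⊤ := by
  have : Fintype ι := Fintype.ofFinite ι
  refine eq_top_iff.2 fun x _ => by_contra fun hx => ?_
  have hclosed : IsClosed (hull ℝ (range A) : Set E) := by
    simpa using isClosed_hull_image (A := A) Finset.univ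
  obtain ⟨y, hy, hxy⟩ := ProperCone.hyperplane_separation' ⟨hull ℝ (range A), hclosed⟩ hx
  have : -y = 0 := h _ fun i => by
    simpa [inner_neg_right] using hy (A i) (subset_hull ⟨i, rfl⟩)
  simp_all

lemma exists_inner_le_of_mem_hull_image {S : Finset ι} {b : ι → ℝ} {v : E}
    (hv : v ∈ hull ℝ (A '' S)) : ∃ B, ∀ x ∈ {x | ∀ i ∈ S, ⟪A i, x⟫ ≤ b i}, ⟪v, x⟫ ≤ B := by
  obtain ⟨c, hc, rfl⟩ := mem_hull_image_finset_iff.1 hv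
  refine ⟨∑ i ∈ S, c i * b i, fun x hx => ?_⟩
  rw [sum_inner]
  refine Finset.sum_le_sum fun i hi => ?_
  rw [real_inner_smul_left]
  exact mul_le_mul_of_nonneg_left (hx i hi) (hc i hi)

end InnerProductSpace

end PointedCone

section InnerProductSpace

variable {E : Type*} [NormedAddCommGroup E] [InnerProductSpace ℝ E]

lemma isBounded_of_forall_exists_inner_le [FiniteDimensional ℝ E] {s : Set E}
    (h : ∀ v, ∃ B, ∀ x ∈ s, ⟪v, x⟫ ≤ B) : Bornology.IsBounded s := by
  let e := stdOrthonormalBasis ℝ E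
  choose B hB using h
  refine isBounded_iff_forall_norm_le.2 ⟨∑ j, max (B (e j)) (B (-e j)), fun x hx => ?_⟩
  calc ‖x‖ = ‖∑ j, ⟪e j, x⟫ • e j‖ := by rw [e.sum_repr']
    _ ≤ ∑ j, |⟪e j, x⟫| := (norm_sum_le _ _).trans (by simp [norm_smul])
    _ ≤ _ := Finset.sum_le_sum fun j _ => abs_le.2
      ⟨by linarith [hB (-e j) x hx, inner_neg_left (𝕜 := ℝ) (e j) x,
          le_max_right (B (e j)) (B (-e j))],
        (hB _ x hx).trans (le_max_left _ _)⟩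

lemma eq_zero_of_isBounded_of_forall_add_smul_mem {s : Set E} (hs : Bornology.IsBounded s)
    {x y : E} (h : ∀ t : ℝ, 0 ≤ t → x + t • y ∈ s) : y = 0 := by
  obtain ⟨R, hR⟩ := isBounded_iff_forall_norm_le.1 hs
  have hx : ‖x‖ ≤ R := by simpa using hR _ (h 0 le_rfl)
  by_contra hy
  have hy' : 0 < ‖y‖ := norm_pos_iff.2 hy
  set t := (2 * R + 1) / ‖y‖
  have ht : 0 ≤ t := div_nonneg (by linarith [norm_nonneg x]) hy'.le
  have : ‖t • y‖ ≤ 2 * R := calc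
    ‖t • y‖ = ‖(x + t • y) - x‖ := by simp
    _ ≤ ‖x + t • y‖ + ‖x‖ := norm_sub_le _ _
    _ ≤ 2 * R := by linarith [hR _ (h t ht)]
  rw [norm_smul, Real.norm_of_nonneg ht, div_mul_cancel₀ _ hy'.ne'] at this
  linarith

end InnerProductSpace

/-- If the polyhedron `P = {x ∈ ℝ^d : Ax ≤ b}` is nonempty and bounded, then there is a
subset `S` of at most `2d` of the `m` inequalities whose intersection is already bounded. -/
theorem exists_bounded_subsystem {d m : ℕ}
    (A : Fin m → EuclideanSpace ℝ (Fin d)) (b : Fin m → ℝ)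
    (hne : {x : EuclideanSpace ℝ (Fin d) | ∀ i, ⟪A i, x⟫ ≤ b i}.Nonempty)
    (hbdd : Bornology.IsBounded {x : EuclideanSpace ℝ (Fin d) | ∀ i, ⟪A i, x⟫ ≤ b i}) :
    ∃ S : Finset (Fin m), S.card ≤ 2 * d ∧
      Bornology.IsBounded {x : EuclideanSpace ℝ (Fin d) | ∀ i ∈ S, ⟪A i, x⟫ ≤ b i} := by
  obtain ⟨x₀, hx₀⟩ := hne
  have hrec : ∀ y, (∀ i, ⟪A i, y⟫ ≤ 0) → y = 0 := fun y hy =>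
    eq_zero_of_isBounded_of_forall_add_smul_mem hbdd (x := x₀) fun t ht i => by
      rw [inner_add_right, real_inner_smul_right]
      linarith [hx₀ i, mul_nonpos_of_nonneg_of_nonpos ht (hy i)]
  obtain ⟨S, hcard, hS⟩ := PointedCone.exists_card_le_two_mul_finrank_hull_eq_top
    (PointedCone.hull_range_eq_top_of_forall_inner_nonpos hrec)
  exact ⟨S, by simpa using hcard, isBounded_of_forall_exists_inner_le fun v =>
    PointedCone.exists_inner_le_of_mem_hull_image (hS ▸ Submodule.mem_top)⟩
end
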